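/- arXiv:1503.08546 — 4 statements merged into one kernel-verified Lean document; each statement's English description precedes it below -/
import Mathlib

section
/- Exactness of the variational complex: (i) the kernel of ∂_x on A consists exactly of the constant polynomials ℝ·1; (ii) if f ∈ A has zero constant term and δf = 0, then there exists g ∈ A with f = ∂_x g. -/
/-!
(i) `∂ₓ` is the derivation sending `u_k ↦ u_{k+1}`, and `[∂/∂u_{n+1}, ∂ₓ] = ∂/∂u_n`. If `n` is the
largest index occurring in `f`, this gives `∂/∂u_{n+1} (∂ₓ f) = ∂f/∂u_n`, which is nonzero in
characteristic zero; so `∂ₓ f = 0` forces `f` to be constant.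

(ii) Integration by parts, `u_k h ≡ (-1)^k u_0 ∂ₓ^k h` modulo `im ∂ₓ`, applied to `h = ∂f/∂u_k` and
summed over `k`, gives `E f ≡ u_0 δf` for the Euler derivation `E = Σ u_k ∂/∂u_k`. So `δf = 0` puts
`E f` in `im ∂ₓ`. As `∂ₓ` preserves degree, `im ∂ₓ` is a graded subspace, and `E` is multiplication
by `d` in degree `d`; hence every homogeneous component of `f` of positive degree lies in `im ∂ₓ`.
-/

open MvPolynomial

/-- The derivation `∂ₓ = Σ_{k≥0} u_{k+1} ∂/∂u_k` on `A = ℝ[u₀, u₁, …]`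
(the sum is finite on each polynomial). -/
noncomputable def dx (f : MvPolynomial ℕ ℝ) : MvPolynomial ℕ ℝ :=
  ∑ᶠ k : ℕ, X (k + 1) * pderiv k f

/-- The variational derivative `δ = Σ_{k≥0} (−1)^k ∂ₓ^k ∘ (∂/∂u_k)`
(the sum is finite on each polynomial). -/
noncomputable def delta (f : MvPolynomial ℕ ℝ) : MvPolynomial ℕ ℝ :=
  ∑ᶠ k : ℕ, ((-1 : ℝ) ^ k) • (dx^[k] (pderiv k f))

namespace MvPolynomial

section CommSemiring

variable {σ R : Type*} [CommSemiring R]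

theorem derivation_eq_sum_mul_pderiv (D : Derivation R (MvPolynomial σ R) (MvPolynomial σ R))
    {s : Finset σ} {f : MvPolynomial σ R} (hs : f.vars ⊆ s) :
    D f = ∑ i ∈ s, D (X i) * pderiv i f := by
  classical
  let D' : Derivation R (MvPolynomial σ R) (MvPolynomial σ R) := ∑ i ∈ s, D (X i) • pderiv i
  have hD' (g : MvPolynomial σ R) : D' g = ∑ i ∈ s, D (X i) * pderiv i g := by
    rw [← Derivation.coeFnAddMonoidHom_apply, map_sum, Finset.sum_apply]
    rfl
  rw [← hD']
  refine derivation_eqOn_supported (s := s) (fun j hj => ?_) (mem_supported.2 hs)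
  simp [hD', pderiv_X, Pi.single_apply, Finset.mem_coe.1 hj]

theorem pderiv_ne_zero_of_mem_vars [NoZeroDivisors R] [CharZero R] {f : MvPolynomial σ R} {i : σ}
    (hi : i ∈ f.vars) : pderiv i f ≠ 0 := by
  obtain ⟨u, hu, hui⟩ := (mem_vars_iff_mem_support i).1 hi
  have hle : Finsupp.single i 1 ≤ u :=
    Finsupp.single_le_iff.2 (Nat.one_le_iff_ne_zero.2 (Finsupp.mem_support_iff.1 hui))
  intro h
  have hcoeff := coeff_pderiv (i := i) f (u - Finsupp.single i 1)
  rw [h, coeff_zero, tsub_add_cancel_of_le hle] at hcoeff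
  exact mul_ne_zero (mem_support_iff.1 hu) (Nat.cast_add_one_ne_zero _) hcoeff.symm

theorem IsHomogeneous.derivation {D : Derivation R (MvPolynomial σ R) (MvPolynomial σ R)}
    (hD : ∀ i, (D (X i)).IsHomogeneous 1) {f : MvPolynomial σ R} {n : ℕ}
    (hf : f.IsHomogeneous n) : (D f).IsHomogeneous n := by
  rcases n with _ | n
  · rw [← totalDegree_zero_iff_isHomogeneous, totalDegree_eq_zero_iff_eq_C] at hf
    rw [hf, derivation_C]
    exact isHomogeneous_zero _ _ _
  · rw [derivation_eq_sum_mul_pderiv D subset_rfl, add_comm]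
    exact IsHomogeneous.sum _ _ _ fun i _ => (hD i).mul hf.pderiv

theorem map_homogeneousComponent_of_isHomogeneous (L : MvPolynomial σ R →ₗ[R] MvPolynomial σ R)
    (hL : ∀ {n : ℕ} {f : MvPolynomial σ R}, f.IsHomogeneous n → (L f).IsHomogeneous n)
    (n : ℕ) (f : MvPolynomial σ R) :
    L (homogeneousComponent n f) = homogeneousComponent n (L f) := by
  conv_rhs => rw [← sum_homogeneousComponent f, map_sum, map_sum]
  rw [Finset.sum_eq_single n]
  · rw [homogeneousComponent_of_mem (hL (homogeneousComponent_isHomogeneous n f)), if_pos rfl]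
  · intro i _ hin
    rw [homogeneousComponent_of_mem (hL (homogeneousComponent_isHomogeneous i f)),
      if_neg (Ne.symm hin)]
  · intro hn
    rw [homogeneousComponent_eq_zero n f (by simpa using hn), map_zero, map_zero]

variable (R) in
noncomputable def eulerDerivation : Derivation R (MvPolynomial σ R) (MvPolynomial σ R) :=
  mkDerivation R X

@[simp]
theorem eulerDerivation_X (i : σ) : eulerDerivation R (X i) = X i :=
  mkDerivation_X R X i

theorem eulerDerivation_monomial (u : σ →₀ ℕ) (r : R) :
    eulerDerivation R (monomial u r) = u.degree • monomial u r := by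
  have hvars : (monomial u r).vars ⊆ u.support := by
    by_cases hr : r = 0
    · simp [hr]
    · rw [vars_monomial hr]
  rw [derivation_eq_sum_mul_pderiv _ hvars, Finsupp.degree_apply, Finset.sum_smul]
  simp only [eulerDerivation_X, X_mul_pderiv_monomial]

theorem IsHomogeneous.eulerDerivation_eq {f : MvPolynomial σ R} {n : ℕ}
    (hf : f.IsHomogeneous n) : eulerDerivation R f = n • f := by
  conv_lhs => rw [f.as_sum]
  conv_rhs => rw [f.as_sum]
  rw [map_sum, Finset.smul_sum]
  refine Finset.sum_congr rfl fun u hu => ?_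
  rw [eulerDerivation_monomial, ← hf (mem_support_iff.1 hu), Finsupp.degree_eq_weight_one]
  rfl

end CommSemiring

theorem mem_range_of_eulerDerivation_mem_range {σ R : Type*} [Field R] [CharZero R]
    {D : Derivation R (MvPolynomial σ R) (MvPolynomial σ R)} (hD : ∀ i, (D (X i)).IsHomogeneous 1)
    {f : MvPolynomial σ R} (h0 : coeff 0 f = 0)
    (hE : eulerDerivation R f ∈ LinearMap.range D.toLinearMap) :
    f ∈ LinearMap.range D.toLinearMap := by
  obtain ⟨g, hg⟩ := hE
  change D g = _ at hg
  rw [← sum_homogeneousComponent f]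
  refine Submodule.sum_mem _ fun n _ => ?_
  rcases n with _ | n
  · rw [homogeneousComponent_zero, h0, map_zero]
    exact Submodule.zero_mem _
  have hcomp : D (homogeneousComponent (n + 1) g) = (n + 1) • homogeneousComponent (n + 1) f :=
    calc D (homogeneousComponent (n + 1) g)
        = homogeneousComponent (n + 1) (D g) :=
          map_homogeneousComponent_of_isHomogeneous D.toLinearMap (·.derivation hD) _ _
      _ = eulerDerivation R (homogeneousComponent (n + 1) f) := by
          rw [hg]
          exact (map_homogeneousComponent_of_isHomogeneous (eulerDerivation R).toLinearMap
            (·.derivation fun i => by simpa using isHomogeneous_X R i) _ _).symm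
      _ = (n + 1) • homogeneousComponent (n + 1) f :=
          (homogeneousComponent_isHomogeneous _ _).eulerDerivation_eq
  refine (Submodule.smul_mem_iff _ (s := ((n + 1 : ℕ) : R))
    (Nat.cast_ne_zero.2 n.succ_ne_zero)).1 ?_
  rw [Nat.cast_smul_eq_nsmul, ← hcomp]
  exact LinearMap.mem_range_self _ _

end MvPolynomial

noncomputable def dxDerivation : Derivation ℝ (MvPolynomial ℕ ℝ) (MvPolynomial ℕ ℝ) :=
  mkDerivation ℝ fun k => X (k + 1)

@[simp]
theorem dxDerivation_X (k : ℕ) : dxDerivation (X k) = X (k + 1) :=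
  mkDerivation_X ℝ _ k

theorem dx_eq_dxDerivation : dx = ⇑dxDerivation := by
  funext f
  rw [dx, finsum_eq_sum_of_support_subset (s := f.vars), derivation_eq_sum_mul_pderiv _ subset_rfl]
  · simp only [dxDerivation_X]
  · intro k hk
    by_contra hkf
    exact hk (by simp [pderiv_eq_zero_of_notMem_vars hkf])

theorem delta_eq_sum (f : MvPolynomial ℕ ℝ) :
    delta f = ∑ k ∈ f.vars, (-1 : ℝ) ^ k • dxDerivation^[k] (pderiv k f) := by
  rw [delta, dx_eq_dxDerivation, finsum_eq_sum_of_support_subset]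
  intro k hk
  by_contra hkf
  exact hk (by simp [pderiv_eq_zero_of_notMem_vars hkf, iterate_map_zero])

theorem pderiv_succ_dxDerivation (n : ℕ) (f : MvPolynomial ℕ ℝ) :
    pderiv (n + 1) (dxDerivation f) = dxDerivation (pderiv (n + 1) f) + pderiv n f := by
  have hcomm : ⁅(pderiv (n + 1) : Derivation ℝ (MvPolynomial ℕ ℝ) _), dxDerivation⁆ = pderiv n := by
    ext k
    by_cases hk : k = n <;> by_cases hk' : k = n + 1 <;>
      simp [Derivation.commutator_apply, pderiv_X, hk, hk']
  rw [← hcomm, Derivation.commutator_apply]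
  abel

theorem dxDerivation_eq_zero_iff (f : MvPolynomial ℕ ℝ) :
    dxDerivation f = 0 ↔ ∃ c : ℝ, f = C c := by
  refine ⟨fun hf => ⟨coeff 0 f, vars_eq_empty_iff_eq_C.1 ?_⟩, fun ⟨c, hc⟩ => hc ▸ derivation_C _ c⟩
  by_contra hne
  obtain ⟨n, hn, hmax⟩ := f.vars.exists_max_image id (Finset.nonempty_iff_ne_empty.2 hne)
  have hsucc : pderiv (n + 1) f = 0 :=
    pderiv_eq_zero_of_notMem_vars fun h => by simpa using hmax _ h
  have hderiv := pderiv_succ_dxDerivation n f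
  rw [hf, hsucc, map_zero, map_zero, zero_add] at hderiv
  exact pderiv_ne_zero_of_mem_vars hn hderiv.symm

theorem X_mul_sub_X_zero_mul_iterate_mem_range (k : ℕ) (h : MvPolynomial ℕ ℝ) :
    X k * h - (-1 : ℝ) ^ k • (X 0 * dxDerivation^[k] h) ∈
      LinearMap.range dxDerivation.toLinearMap := by
  induction k generalizing h with
  | zero => simp
  | succ k ih =>
    have hX : X (k + 1) * h = dxDerivation (X k * h) - X k * dxDerivation h := by
      simp [Derivation.leibniz, mul_comm]
    convert Submodule.sub_mem _ (LinearMap.mem_range_self _ (X k * h)) (ih (dxDerivation h)) using 1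
    rw [hX, Function.iterate_succ_apply, pow_succ, Derivation.coeFn_coe]
    module

theorem eulerDerivation_sub_X_zero_mul_delta_mem_range (f : MvPolynomial ℕ ℝ) :
    eulerDerivation ℝ f - X 0 * delta f ∈ LinearMap.range dxDerivation.toLinearMap := by
  rw [derivation_eq_sum_mul_pderiv _ subset_rfl, delta_eq_sum, Finset.mul_sum,
    ← Finset.sum_sub_distrib]
  refine Submodule.sum_mem _ fun k _ => ?_
  rw [eulerDerivation_X, mul_smul_comm]
  exact X_mul_sub_X_zero_mul_iterate_mem_range k (pderiv k f)

/-- exactness of the variational complex: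
(i) `ker ∂ₓ = ℝ·1`;
(ii) if `f` has zero constant term and `δ f = 0`, then `f = ∂ₓ g` for some `g`. -/
theorem variational_complex_exact :
    (∀ f : MvPolynomial ℕ ℝ, dx f = 0 ↔ ∃ c : ℝ, f = C c) ∧
    (∀ f : MvPolynomial ℕ ℝ, coeff 0 f = 0 → delta f = 0 →
      ∃ g : MvPolynomial ℕ ℝ, f = dx g) := by
  refine ⟨fun f => dx_eq_dxDerivation ▸ dxDerivation_eq_zero_iff f, fun f h0 hδ => ?_⟩
  have hE := eulerDerivation_sub_X_zero_mul_delta_mem_range f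
  rw [hδ, mul_zero, sub_zero] at hE
  obtain ⟨g, hg⟩ := mem_range_of_eulerDerivation_mem_range
    (fun k => (dxDerivation_X k).symm ▸ isHomogeneous_X ℝ (k + 1)) h0 hE
  exact ⟨g, by rw [dx_eq_dxDerivation]; exact hg.symm⟩
end

section
/- For every f ∈ A one has δ(u_1 · δf) = 0, i.e. the variational derivative of the product of the variable u_1 with the variational derivative of f vanishes. -/
open MvPolynomial

/-!
Write `D = ∂ₓ`, now viewed as a derivation. Modulo the image of `D`, integration by parts gives
`u_{k+1} c = D^k(u₁) c ≡ (−1)^k u₁ D^k c`, hence `u₁ δf ≡ Σ_k u_{k+1} ∂f/∂u_k = D f`: the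
polynomial `u₁ δf` is a total derivative. And `δ` kills total derivatives, since the commutation
rules `[∂/∂u_{k+1}, D] = ∂/∂u_k`, `[∂/∂u₀, D] = 0` make the sum defining `δ(D g)` telescope.
-/

open Finset

theorem finsum_eq_sum_range_of_eq_zero {M : Type*} [AddCommMonoid M] {φ : ℕ → M} {N : ℕ}
    (h : ∀ k, N ≤ k → φ k = 0) : ∑ᶠ k, φ k = ∑ k ∈ range N, φ k :=
  finsum_eq_sum_of_support_subset φ fun k hk => by
    simpa using not_le.1 (mt (h k) hk)

theorem Derivation.iterate_mul_sub_mul_iterate_mem_range {R A : Type*} [CommRing R]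
    [CommRing A] [Algebra R A] (D : Derivation R A A) (k : ℕ) (a c : A) :
    D^[k] a * c - (-1 : R) ^ k • (a * D^[k] c) ∈ LinearMap.range (D : A →ₗ[R] A) := by
  induction k generalizing c with
  | zero => simp
  | succ k ih =>
    convert Submodule.sub_mem _ (LinearMap.mem_range_self (D : A →ₗ[R] A) (D^[k] a * c))
      (ih (D c)) using 1
    rw [Function.iterate_succ_apply' _ _ a, Function.iterate_succ_apply _ _ c]
    simp only [Derivation.coeFn_coe, Derivation.leibniz, smul_eq_mul, Algebra.smul_def, map_neg,
      map_pow, map_one]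
    ring

namespace MvPolynomial

variable {σ R : Type*}

theorem derivation_eq_finsum_pderiv [CommSemiring R]
    (D : Derivation R (MvPolynomial σ R) (MvPolynomial σ R)) (f : MvPolynomial σ R) :
    D f = ∑ᶠ i, D (X i) * pderiv i f := by
  classical
  rw [finsum_eq_sum_of_support_subset (s := f.vars) _ fun i hi => by
    by_contra h; exact hi (by simp [pderiv_eq_zero_of_notMem_vars h])]
  set D' : Derivation R (MvPolynomial σ R) (MvPolynomial σ R) :=
    ∑ i ∈ f.vars, D (X i) • pderiv i
  have hD' (g : MvPolynomial σ R) : D' g = ∑ i ∈ f.vars, D (X i) * pderiv i g := by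
    rw [← Derivation.coeFnAddMonoidHom_apply, map_sum, Finset.sum_apply]
    simp [Derivation.coeFnAddMonoidHom_apply]
  have hX : Set.EqOn (D ∘ X) (D' ∘ X) f.vars := fun j hj => by
    simp [hD', pderiv_X, Pi.single_apply, Finset.mem_coe.1 hj]
  rw [derivation_eqOn_supported hX (mem_supported_vars f), hD']

theorem exists_pderiv_eq_zero [CommSemiring R] (f : MvPolynomial ℕ R) :
    ∃ N, ∀ k, N ≤ k → pderiv k f = 0 := by
  obtain ⟨N, hN⟩ := f.vars.exists_nat_subset_range
  exact ⟨N, fun k hk => pderiv_eq_zero_of_notMem_vars fun hk' => by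
    simpa using (Finset.mem_range.1 (hN hk')).trans_le hk⟩

end MvPolynomial

noncomputable def totalDeriv : Derivation ℝ (MvPolynomial ℕ ℝ) (MvPolynomial ℕ ℝ) :=
  mkDerivation ℝ fun k => X (k + 1)

theorem totalDeriv_X (k : ℕ) : totalDeriv (X k) = X (k + 1) :=
  mkDerivation_X ℝ _ k

theorem dx_eq_totalDeriv : dx = totalDeriv := by
  funext f
  simp [dx, derivation_eq_finsum_pderiv totalDeriv f, totalDeriv_X]

theorem iterate_totalDeriv_X (n k : ℕ) : totalDeriv^[k] (X n) = X (n + k) := by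
  induction k with
  | zero => rfl
  | succ k ih => rw [Function.iterate_succ_apply', ih, totalDeriv_X, add_assoc]

theorem pderiv_zero_totalDeriv (g : MvPolynomial ℕ ℝ) :
    pderiv 0 (totalDeriv g) = totalDeriv (pderiv 0 g) := by
  have h : ⁅pderiv 0, totalDeriv⁆ = 0 := derivation_ext fun j => by
    classical
    rw [Derivation.commutator_apply, totalDeriv_X, pderiv_X, pderiv_X]
    simp [Pi.single_apply, apply_ite]
  rw [← sub_eq_zero, ← Derivation.commutator_apply, h, Derivation.zero_apply]

theorem pderiv_succ_totalDeriv (k : ℕ) (g : MvPolynomial ℕ ℝ) :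
    pderiv (k + 1) (totalDeriv g) = totalDeriv (pderiv (k + 1) g) + pderiv k g := by
  have h : ⁅pderiv (k + 1), totalDeriv⁆ = pderiv k := derivation_ext fun j => by
    classical
    rw [Derivation.commutator_apply, totalDeriv_X, pderiv_X, pderiv_X, pderiv_X]
    simp [Pi.single_apply, apply_ite]
  rw [← h, Derivation.commutator_apply]
  abel

theorem delta_eq_sum_range {N : ℕ} {f : MvPolynomial ℕ ℝ} (h : ∀ k, N ≤ k → pderiv k f = 0) :
    delta f = ∑ k ∈ range N, (-1 : ℝ) ^ k • totalDeriv^[k] (pderiv k f) := by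
  rw [delta, dx_eq_totalDeriv]
  exact finsum_eq_sum_range_of_eq_zero fun k hk => by rw [h k hk, iterate_map_zero, smul_zero]

theorem delta_totalDeriv (g : MvPolynomial ℕ ℝ) : delta (totalDeriv g) = 0 := by
  obtain ⟨N, hN⟩ := exists_pderiv_eq_zero g
  have hDg : ∀ k, N + 1 ≤ k → pderiv k (totalDeriv g) = 0 := fun k hk => by
    obtain ⟨k, rfl⟩ : ∃ m, k = m + 1 := ⟨k - 1, by omega⟩
    rw [pderiv_succ_totalDeriv, hN _ (by omega), hN _ (by omega), map_zero, add_zero]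
  set a : ℕ → MvPolynomial ℕ ℝ := fun k => (-1 : ℝ) ^ k • totalDeriv^[k + 1] (pderiv k g)
  have hterm (k : ℕ) : (-1 : ℝ) ^ (k + 1) • totalDeriv^[k + 1] (pderiv (k + 1) (totalDeriv g)) =
      a (k + 1) - a k := by
    rw [pderiv_succ_totalDeriv, iterate_map_add, ← Function.iterate_succ_apply, pow_succ]
    module
  have ha0 : a 0 = (-1 : ℝ) ^ 0 • totalDeriv^[0] (pderiv 0 (totalDeriv g)) := by
    simp only [a, pderiv_zero_totalDeriv, zero_add, Function.iterate_one,
      Function.iterate_zero_apply]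
  have haN : a N = 0 := by simp only [a, hN N le_rfl, iterate_map_zero, smul_zero]
  rw [delta_eq_sum_range hDg, sum_range_succ', sum_congr rfl fun k _ => hterm k, sum_range_sub,
    haN, ha0, zero_sub, neg_add_cancel]

theorem X_one_mul_delta_mem_range (f : MvPolynomial ℕ ℝ) :
    X 1 * delta f ∈ LinearMap.range (totalDeriv : MvPolynomial ℕ ℝ →ₗ[ℝ] MvPolynomial ℕ ℝ) := by
  obtain ⟨N, h⟩ := exists_pderiv_eq_zero f
  have hDf : totalDeriv f = ∑ k ∈ range N, X (k + 1) * pderiv k f := by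
    rw [← congrFun dx_eq_totalDeriv f, dx]
    exact finsum_eq_sum_range_of_eq_zero fun k hk => by rw [h k hk, mul_zero]
  have hibp : totalDeriv f - X 1 * delta f = ∑ k ∈ range N,
      (totalDeriv^[k] (X 1) * pderiv k f - (-1 : ℝ) ^ k • (X 1 * totalDeriv^[k] (pderiv k f))) := by
    simp only [hDf, delta_eq_sum_range h, mul_sum, ← sum_sub_distrib, iterate_totalDeriv_X,
      mul_smul_comm, add_comm 1]
  have hmem : totalDeriv f - X 1 * delta f ∈
      LinearMap.range (totalDeriv : MvPolynomial ℕ ℝ →ₗ[ℝ] MvPolynomial ℕ ℝ) :=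
    hibp ▸ Submodule.sum_mem _ fun k _ => totalDeriv.iterate_mul_sub_mul_iterate_mem_range k _ _
  simpa using Submodule.sub_mem _ (LinearMap.mem_range_self _ f) hmem

/-- `δ(u₁ · δf) = 0` for every `f ∈ A`. -/
theorem delta_u1_delta_eq_zero :
    ∀ f : MvPolynomial ℕ ℝ, delta (X 1 * delta f) = 0 := by
  intro f
  obtain ⟨g, hg⟩ := X_one_mul_delta_mem_range f
  rw [← hg]
  exact delta_totalDeriv g
end

section
/- Euler–Lagrange equation is equivalent to the string equation: let u ∈ ℝ[[t_0, t_1, t_2, …]] be a formal power series not involving λ. Then Σ_{n≥0} (t_n − δ_{n,1}) · ((1 − λ ∂/∂λ) R_n)[u] = 0 holds in ℝ[λ][[t_0, t_1, t_2, …]] if and only if the string equation u = Σ_{k≥1} t_k R_k[u] + t_0 holds (equivalently, Σ_{n≥0} (t_n − δ_{n,1}) R_n[u] = 0). Here δ_{n,1} is the Kronecker delta and all infinite sums are well-defined coefficientwise. -/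
open MvPolynomial

/-- The λ-linear extension of `∂ₓ` to `A[λ]` (acting on coefficients). -/
noncomputable def dxP (p : Polynomial (MvPolynomial ℕ ℝ)) :
    Polynomial (MvPolynomial ℕ ℝ) :=
  p.sum fun n a => Polynomial.C (dx a) * Polynomial.X ^ n

/-- `p ∈ A[λ]` has zero constant term: the constant term (in the variables `u_k`)
of every `λ`-coefficient of `p` vanishes. -/
def NoConst (p : Polynomial (MvPolynomial ℕ ℝ)) : Prop :=
  ∀ i : ℕ, coeff 0 (p.coeff i) = 0

/-- `R : ℕ → A[λ]` is the sequence of Gelfand–Dickey polynomials: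
`R 0 = 1`, each `R n` for `n ≥ 1` has zero constant term, and the Lenard recursion
`(2n+1) ∂ₓ R_{n+1} = u₁ R_n + 2 u₀ ∂ₓ R_n + (λ²/4) ∂ₓ³ R_n` holds. -/
def IsGD (R : ℕ → Polynomial (MvPolynomial ℕ ℝ)) : Prop :=
  R 0 = 1 ∧ (∀ n : ℕ, 1 ≤ n → NoConst (R n)) ∧
  ∀ n : ℕ,
    Polynomial.C (MvPolynomial.C (2 * (n : ℝ) + 1)) * dxP (R (n + 1)) =
      Polynomial.C (X 1) * R n
      + Polynomial.C (MvPolynomial.C 2 * X 0) * dxP (R n)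
      + Polynomial.C (MvPolynomial.C (1 / 4 : ℝ)) * Polynomial.X ^ 2
          * dxP (dxP (dxP (R n)))

/-- Formal partial derivative `∂/∂t₀` on `MvPowerSeries ℕ S`, defined coefficientwise. -/
noncomputable def D0 {S : Type*} [CommSemiring S] (f : MvPowerSeries ℕ S) :
    MvPowerSeries ℕ S :=
  fun m => (m 0 + 1 : ℕ) • MvPowerSeries.coeff (R := S) (m + Finsupp.single 0 1) f

/-- Substitution `P ↦ P[u]`: substitute `u_k ↦ v k` and `λ ↦ lam` in `P ∈ A[λ]`. -/
noncomputable def substP {S : Type*} [CommRing S] [Algebra ℝ S]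
    (lam : S) (v : ℕ → S) (P : Polynomial (MvPolynomial ℕ ℝ)) : S :=
  Polynomial.eval₂ (MvPolynomial.aeval v).toRingHom lam P

/-- `P[u]` for `u ∈ ℝ[[t₀,t₁,…]]` not involving `λ`, landing in `ℝ[λ][[t₀,t₁,…]]`:
substitute `u_k ↦ ∂_{t₀}^k u` and `λ ↦ λ`. -/
noncomputable def sb' (u : MvPowerSeries ℕ ℝ)
    (P : Polynomial (MvPolynomial ℕ ℝ)) : MvPowerSeries ℕ (Polynomial ℝ) :=
  substP (MvPowerSeries.C (σ := ℕ) (R := Polynomial ℝ) Polynomial.X)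
    (fun k => D0^[k] (MvPowerSeries.map (σ := ℕ) (Polynomial.C : ℝ →+* Polynomial ℝ) u)) P

/-!
The Lenard recursion forces the `λ`-linear coefficient of every `R_n` to vanish, because `∂ₓ`
kills only constants and `R_n` has no constant term for `n ≥ 1`; for the same reason `R_1 = u_0`.
The operator `1 - λ ∂/∂λ` multiplies `λ^j` by `1 - j`, so it commutes with substitution and
with multiplication by `λ`-free series, and it is injective on polynomials without linear term.
Hence it can be pulled out of the Euler–Lagrange sum and cancelled. What remains is the identity
`Σ (t_n − δ_{n,1}) R_n[u] = t_0 + Σ_{k≥1} t_k R_k[u] − u`, which only uses `R_0 = 1`, `R_1 = u_0`.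
-/

namespace MvPolynomial

variable {σ R : Type*} [CommSemiring R]

theorem vars_pderiv_subset (i : σ) (f : MvPolynomial σ R) : (pderiv i f).vars ⊆ f.vars := by
  intro j hj
  obtain ⟨d, hd, hdj⟩ := (mem_vars_iff_mem_support j).mp hj
  rw [mem_support_iff, coeff_pderiv] at hd
  refine (mem_vars_iff_mem_support j).mpr
    ⟨d + Finsupp.single i 1, mem_support_iff.mpr (left_ne_zero_of_mul hd), ?_⟩
  simp only [Finsupp.mem_support_iff, Finsupp.add_apply] at hdj ⊢
  omega

theorem pderiv_eq_zero_iff [NoZeroDivisors R] [CharZero R] {i : σ} {f : MvPolynomial σ R} :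
    pderiv i f = 0 ↔ i ∉ f.vars := by
  classical
  refine ⟨fun h hi => ?_, pderiv_eq_zero_of_notMem_vars⟩
  obtain ⟨d, hd, hdi⟩ := (mem_vars_iff_mem_support i).mp hi
  have hcoeff := congrArg (coeff (d - Finsupp.single i 1)) h
  rw [coeff_pderiv, tsub_add_cancel_of_le (Finsupp.single_le_iff.mpr
    (Nat.one_le_iff_ne_zero.mpr (Finsupp.mem_support_iff.mp hdi))), coeff_zero] at hcoeff
  exact mul_ne_zero (mem_support_iff.mp hd) (Nat.cast_add_one_ne_zero _) hcoeff

end MvPolynomial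

theorem support_dx_summand_subset (f : MvPolynomial ℕ ℝ) :
    Function.support (fun k => X (k + 1) * pderiv k f) ⊆ f.vars := fun k hk => by
  by_contra hkf
  exact hk (by simp only [pderiv_eq_zero_of_notMem_vars hkf, mul_zero])

theorem dx_eq_sum {f : MvPolynomial ℕ ℝ} {s : Finset ℕ} (hs : f.vars ⊆ s) :
    dx f = ∑ k ∈ s, X (k + 1) * pderiv k f :=
  finsum_eq_sum_of_support_subset _ ((support_dx_summand_subset f).trans (by exact_mod_cast hs))

theorem dx_C (r : ℝ) : dx (C r) = 0 := by
  simp [dx_eq_sum (s := ∅) (f := C r) (by simp)]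

theorem dx_zero : dx 0 = 0 := by
  simpa using dx_C 0

theorem dx_X (k : ℕ) : dx (X k) = X (k + 1) := by
  simp [dx_eq_sum (s := {k}) (f := X k) (by simp)]

theorem dx_sub (f g : MvPolynomial ℕ ℝ) : dx (f - g) = dx f - dx g := by
  classical
  rw [dx_eq_sum (vars_sub_subset f), dx_eq_sum Finset.subset_union_left,
    dx_eq_sum Finset.subset_union_right, ← Finset.sum_sub_distrib]
  simp only [map_sub, mul_sub]

/-- `∂ₓ` shifts indices up by one, so `u_{N+1}` can only come from `u_N`. -/
theorem pderiv_succ_dx {f : MvPolynomial ℕ ℝ} {N : ℕ} (hN : ∀ i ∈ f.vars, i ≤ N) :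
    pderiv (N + 1) (dx f) = pderiv N f := by
  have hvars : f.vars ⊆ Finset.range (N + 1) := fun i hi =>
    Finset.mem_range.mpr (Nat.lt_succ_of_le (hN i hi))
  have hsecond : ∀ k, pderiv (N + 1) (pderiv k f) = 0 := fun k =>
    pderiv_eq_zero_of_notMem_vars fun h => by
      have := hN _ (vars_pderiv_subset k f h); omega
  rw [dx_eq_sum hvars, map_sum, Finset.sum_eq_single_of_mem N (Finset.self_mem_range_succ N)]
  · rw [pderiv_mul, pderiv_X_self, one_mul, hsecond, mul_zero, add_zero]
  · intro k _ hkN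
    rw [pderiv_mul, pderiv_X_of_ne (by omega), zero_mul, hsecond, mul_zero, add_zero]

theorem eq_C_of_dx_eq_zero {f : MvPolynomial ℕ ℝ} (h : dx f = 0) : f = C (coeff 0 f) := by
  refine vars_eq_empty_iff_eq_C.mp (Finset.eq_empty_of_forall_notMem fun i hi => ?_)
  have hne : f.vars.Nonempty := ⟨i, hi⟩
  have hmax : pderiv (f.vars.max' hne) f = 0 := by
    rw [← pderiv_succ_dx fun i hi => f.vars.le_max' i hi, h, map_zero]
  exact pderiv_eq_zero_iff.mp hmax (f.vars.max'_mem hne)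

theorem coeff_dxP (p : Polynomial (MvPolynomial ℕ ℝ)) (i : ℕ) :
    (dxP p).coeff i = dx (p.coeff i) := by
  classical
  simp only [dxP, Polynomial.sum_def, Polynomial.finsetSum_coeff, Polynomial.coeff_C_mul_X_pow]
  rw [Finset.sum_ite_eq]
  split_ifs with h
  · rfl
  · rw [Polynomial.notMem_support_iff.mp h, dx_zero]

theorem dxP_C (a : MvPolynomial ℕ ℝ) : dxP (Polynomial.C a) = Polynomial.C (dx a) := by
  ext1 i
  rw [coeff_dxP, Polynomial.coeff_C, Polynomial.coeff_C]
  split_ifs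
  · rfl
  · exact dx_zero

theorem dxP_zero : dxP 0 = 0 := by
  simpa [dx_zero] using dxP_C 0

theorem dxP_sub (p q : Polynomial (MvPolynomial ℕ ℝ)) : dxP (p - q) = dxP p - dxP q := by
  ext1 i
  simp only [coeff_dxP, Polynomial.coeff_sub, dx_sub]

theorem NoConst.coeff_eq_zero_of_dx {p : Polynomial (MvPolynomial ℕ ℝ)} (hp : NoConst p) {i : ℕ}
    (h : dx (p.coeff i) = 0) : p.coeff i = 0 := by
  rw [eq_C_of_dx_eq_zero h, hp i, map_zero]

theorem NoConst.eq_zero_of_dxP {p : Polynomial (MvPolynomial ℕ ℝ)} (hp : NoConst p)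
    (h : dxP p = 0) : p = 0 := by
  ext1 i
  exact hp.coeff_eq_zero_of_dx (by rw [← coeff_dxP, h, Polynomial.coeff_zero])

namespace IsGD

variable {R : ℕ → Polynomial (MvPolynomial ℕ ℝ)}

theorem apply_one (hR : IsGD R) : R 1 = Polynomial.C (X 0) := by
  obtain ⟨h0, hnc, hrec⟩ := hR
  have hdx : dxP (R 1) = Polynomial.C (X 1) := by
    have hdx1 : dxP 1 = 0 := by rw [← Polynomial.C_1, dxP_C, ← MvPolynomial.C_1, dx_C, map_zero]
    simpa [h0, hdx1, dxP_zero] using hrec 0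
  have hnc' : NoConst (R 1 - Polynomial.C (X 0)) := fun i => by
    rw [Polynomial.coeff_sub, coeff_sub, hnc 1 le_rfl i, Polynomial.coeff_C]
    split_ifs <;> simp
  rw [← sub_eq_zero]
  exact hnc'.eq_zero_of_dxP (by rw [dxP_sub, hdx, dxP_C, dx_X, sub_self])

theorem coeff_one_eq_zero (hR : IsGD R) (n : ℕ) : (R n).coeff 1 = 0 := by
  obtain ⟨h0, hnc, hrec⟩ := hR
  induction n with
  | zero => rw [h0, Polynomial.coeff_one, if_neg one_ne_zero]
  | succ n ih =>
    have h := congrArg (Polynomial.coeff · 1) (hrec n)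
    simp only [Polynomial.coeff_add, Polynomial.coeff_C_mul, coeff_dxP, ih, dx_zero, mul_zero,
      mul_assoc, Polynomial.coeff_X_pow_mul', Nat.not_ofNat_le_one, if_false, add_zero] at h
    have hc : (MvPolynomial.C (2 * (n : ℝ) + 1) : MvPolynomial ℕ ℝ) ≠ 0 :=
      (map_ne_zero_iff _ (C_injective ℕ ℝ)).mpr (by positivity)
    exact (hnc (n + 1) (by omega)).coeff_eq_zero_of_dx ((mul_eq_zero.mp h).resolve_left hc)

end IsGD

namespace Polynomial

variable {A : Type*} [CommRing A]

noncomputable def oneSubXDerivative : A[X] →ₗ[A] A[X] :=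
  LinearMap.id - LinearMap.mulLeft A X ∘ₗ derivative

theorem oneSubXDerivative_apply (p : A[X]) :
    oneSubXDerivative p = p - X * derivative p := rfl

theorem coeff_oneSubXDerivative (p : A[X]) (j : ℕ) :
    (oneSubXDerivative p).coeff j = p.coeff j - j • p.coeff j := by
  rw [oneSubXDerivative_apply, coeff_sub, nsmul_eq_mul]
  cases j with
  | zero => simp
  | succ j => rw [coeff_X_mul, coeff_derivative, mul_comm]; push_cast; rfl

theorem oneSubXDerivative_eq_zero_iff [IsDomain A] [CharZero A] {p : A[X]}
    (hp : p.coeff 1 = 0) : oneSubXDerivative p = 0 ↔ p = 0 := by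
  refine ⟨fun h => ext fun j => ?_, fun h => by rw [h, map_zero]⟩
  rcases eq_or_ne j 1 with rfl | hj
  · exact hp
  have hcoeff := congrArg (coeff · j) h
  simp only [coeff_oneSubXDerivative, coeff_zero, nsmul_eq_mul, ← one_sub_mul] at hcoeff
  refine (mul_eq_zero.mp hcoeff).resolve_left (sub_ne_zero.mpr ?_)
  exact_mod_cast hj.symm

end Polynomial

theorem coeff_D0 {S : Type*} [CommSemiring S] (f : MvPowerSeries ℕ S) (m : ℕ →₀ ℕ) :
    MvPowerSeries.coeff m (D0 f) =
      (m 0 + 1) • MvPowerSeries.coeff (m + Finsupp.single 0 1) f := rfl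

theorem D0_map {S T : Type*} [CommSemiring S] [CommSemiring T] (φ : S →+* T)
    (f : MvPowerSeries ℕ S) : D0 (MvPowerSeries.map φ f) = MvPowerSeries.map φ (D0 f) := by
  ext m
  rw [coeff_D0, MvPowerSeries.coeff_map, MvPowerSeries.coeff_map, coeff_D0, map_nsmul]

theorem coeff_coeff_sb' (u : MvPowerSeries ℕ ℝ) (P : Polynomial (MvPolynomial ℕ ℝ))
    (m : ℕ →₀ ℕ) (j : ℕ) :
    (MvPowerSeries.coeff m (sb' u P)).coeff j =
      MvPowerSeries.coeff m (aeval (fun k => D0^[k] u) (P.coeff j)) := by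
  classical
  have hval : aeval (fun k => D0^[k] (MvPowerSeries.map Polynomial.C u)) =
      (MvPowerSeries.mapAlgHom (Polynomial.CAlgHom (R := ℝ) (A := ℝ))).comp
        (aeval fun k => D0^[k] u) := by
    rw [comp_aeval]
    congr 1
    funext k
    exact (Function.Semiconj.iterate_right (fun f => (D0_map Polynomial.C f).symm) k u).symm
  simp only [sb', substP, Polynomial.eval₂_eq_sum, Polynomial.sum_def, map_sum,
    Polynomial.finsetSum_coeff, AlgHom.toRingHom_eq_coe, RingHom.coe_coe, hval, AlgHom.comp_apply,
    ← map_pow, MvPowerSeries.coeff_mul_C, MvPowerSeries.mapAlgHom_apply,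
    MvPowerSeries.coeff_map, Polynomial.CAlgHom_apply, Polynomial.coeff_C_mul_X_pow]
  rw [Finset.sum_ite_eq]
  split_ifs with h
  · rfl
  · rw [Polynomial.notMem_support_iff.mp h, map_zero, map_zero]

theorem coeff_sb'_oneSubXDerivative (u : MvPowerSeries ℕ ℝ)
    (P : Polynomial (MvPolynomial ℕ ℝ)) (m : ℕ →₀ ℕ) :
    MvPowerSeries.coeff m (sb' u (Polynomial.oneSubXDerivative P)) =
      Polynomial.oneSubXDerivative (MvPowerSeries.coeff m (sb' u P)) := by
  ext1 j
  simp only [coeff_coeff_sb', Polynomial.coeff_oneSubXDerivative, map_sub, map_nsmul]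

theorem coeff_one_coeff_sb' {P : Polynomial (MvPolynomial ℕ ℝ)} (hP : P.coeff 1 = 0)
    (u : MvPowerSeries ℕ ℝ) (m : ℕ →₀ ℕ) : (MvPowerSeries.coeff m (sb' u P)).coeff 1 = 0 := by
  rw [coeff_coeff_sb', hP, map_zero, map_zero]

theorem sb'_one (u : MvPowerSeries ℕ ℝ) : sb' u 1 = 1 :=
  Polynomial.eval₂_one _ _

theorem sb'_C_X_zero (u : MvPowerSeries ℕ ℝ) :
    sb' u (Polynomial.C (X 0)) = MvPowerSeries.map Polynomial.C u := by
  rw [sb', substP, Polynomial.eval₂_C]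
  exact aeval_X _ 0

section LambdaFree

variable {σ A M : Type*} [CommSemiring A] [AddCommMonoid M] [Module A M]

theorem map_coeff_map_C_mul_congr (T T' : Polynomial A →ₗ[A] M) (a : MvPowerSeries σ A)
    {F G : MvPowerSeries σ (Polynomial A)}
    (h : ∀ q, T (MvPowerSeries.coeff q F) = T' (MvPowerSeries.coeff q G))
    (m : σ →₀ ℕ) :
    T (MvPowerSeries.coeff m (MvPowerSeries.map Polynomial.C a * F)) =
      T' (MvPowerSeries.coeff m (MvPowerSeries.map Polynomial.C a * G)) := by
  classical
  simp only [MvPowerSeries.coeff_mul, map_sum, MvPowerSeries.coeff_map,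
    ← Polynomial.smul_eq_C_mul, map_smul, h]

end LambdaFree

theorem finsum_nat_eq_zero_add {M : Type*} [AddCommMonoid M] {f : ℕ → M}
    (hf : (Function.support f).Finite) : ∑ᶠ n, f n = f 0 + ∑ᶠ k, f (k + 1) := by
  obtain ⟨N, hN⟩ := hf.bddAbove
  have hsucc : Function.support (fun k => f (k + 1)) ⊆ Finset.range N := fun k hk => by
    have := hN hk; simp only [Finset.coe_range, Set.mem_Iio]; omega
  rw [finsum_eq_sum_of_support_subset f (s := Finset.range (N + 1)) fun n hn => by
      have := hN hn; simp only [Finset.coe_range, Set.mem_Iio]; omega,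
    finsum_eq_sum_of_support_subset _ hsucc, Finset.sum_range_succ', add_comm]

theorem finite_support_ite_eq {α M : Type*} [DecidableEq α] [Zero M] (a : α) (f : α → M) :
    (Function.support fun x => if x = a then f x else 0).Finite :=
  (Set.finite_singleton a).subset fun _ hx => by_contra fun h => hx (if_neg h)

section Coefficientwise

variable {σ S : Type*} [CommRing S]

theorem coeff_X_mul_eq_zero {m : σ →₀ ℕ} {n : σ} (hn : m n = 0) (F : MvPowerSeries σ S) :
    MvPowerSeries.coeff m (MvPowerSeries.X n * F) = 0 := by
  rw [MvPowerSeries.X_def, MvPowerSeries.coeff_monomial_mul, if_neg (by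
    rw [Finsupp.single_le_iff]; omega)]

theorem finite_support_coeff_X_mul (F : σ → MvPowerSeries σ S) (m : σ →₀ ℕ) :
    (Function.support fun n => MvPowerSeries.coeff m (MvPowerSeries.X n * F n)).Finite :=
  m.support.finite_toSet.subset fun _ hn =>
    Finsupp.mem_support_iff.mpr fun h => hn (coeff_X_mul_eq_zero h _)

theorem coeff_X_sub_ite_mul (F : ℕ → MvPowerSeries ℕ S) (m : ℕ →₀ ℕ) (n : ℕ) :
    MvPowerSeries.coeff m ((MvPowerSeries.X n - if n = 1 then 1 else 0) * F n) =
      MvPowerSeries.coeff m (MvPowerSeries.X n * F n) -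
        if n = 1 then MvPowerSeries.coeff m (F n) else 0 := by
  rw [sub_mul, map_sub]
  split_ifs <;> simp

theorem finite_support_coeff_X_sub_ite_mul (F : ℕ → MvPowerSeries ℕ S) (m : ℕ →₀ ℕ) :
    (Function.support fun n =>
      MvPowerSeries.coeff m ((MvPowerSeries.X n - if n = 1 then 1 else 0) * F n)).Finite := by
  simp only [coeff_X_sub_ite_mul]
  exact ((finite_support_coeff_X_mul F m).union (finite_support_ite_eq 1 _)).subset
    (Function.support_sub _ _)

theorem finsum_coeff_X_sub_ite_mul (F : ℕ → MvPowerSeries ℕ S) (m : ℕ →₀ ℕ) :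
    ∑ᶠ n, MvPowerSeries.coeff m ((MvPowerSeries.X n - if n = 1 then 1 else 0) * F n) =
      MvPowerSeries.coeff m (MvPowerSeries.X 0 * F 0) +
        ∑ᶠ k, MvPowerSeries.coeff m (MvPowerSeries.X (k + 1) * F (k + 1)) -
        MvPowerSeries.coeff m (F 1) := by
  simp only [coeff_X_sub_ite_mul]
  rw [finsum_sub_distrib (finite_support_coeff_X_mul F m) (finite_support_ite_eq 1 _),
    finsum_nat_eq_zero_add (finite_support_coeff_X_mul F m),
    finsum_eq_single _ 1 fun n hn => if_neg hn, if_pos rfl]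

end Coefficientwise

/-- The `t`-coefficient `m` of `Σ_{n≥0} (t_n − δ_{n,1}) P_n[u]`. -/
noncomputable def stringSum (u : MvPowerSeries ℕ ℝ) (P : ℕ → Polynomial (MvPolynomial ℕ ℝ))
    (m : ℕ →₀ ℕ) : Polynomial ℝ :=
  ∑ᶠ n, MvPowerSeries.coeff m ((MvPowerSeries.X n - if n = 1 then 1 else 0) * sb' u (P n))

theorem X_sub_ite_eq_map_C (n : ℕ) :
    (MvPowerSeries.X n - if n = 1 then 1 else 0 : MvPowerSeries ℕ (Polynomial ℝ)) =
      MvPowerSeries.map Polynomial.C (MvPowerSeries.X n - if n = 1 then 1 else 0) := by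
  split_ifs <;> simp

theorem stringSum_oneSubXDerivative (u : MvPowerSeries ℕ ℝ)
    (P : ℕ → Polynomial (MvPolynomial ℕ ℝ)) (m : ℕ →₀ ℕ) :
    stringSum u (fun n => Polynomial.oneSubXDerivative (P n)) m =
      Polynomial.oneSubXDerivative (stringSum u P m) := by
  rw [stringSum, stringSum, map_finsum _ (finite_support_coeff_X_sub_ite_mul _ m)]
  refine finsum_congr fun n => ?_
  rw [X_sub_ite_eq_map_C]
  exact map_coeff_map_C_mul_congr LinearMap.id _ _ (coeff_sb'_oneSubXDerivative u (P n)) m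

theorem coeff_one_stringSum {P : ℕ → Polynomial (MvPolynomial ℕ ℝ)}
    (hP : ∀ n, (P n).coeff 1 = 0) (u : MvPowerSeries ℕ ℝ) (m : ℕ →₀ ℕ) :
    (stringSum u P m).coeff 1 = 0 := by
  rw [stringSum, ← Polynomial.lcoeff_apply (R := ℝ),
    map_finsum _ (finite_support_coeff_X_sub_ite_mul _ m)]
  refine finsum_eq_zero_of_forall_eq_zero fun n => ?_
  rw [X_sub_ite_eq_map_C]
  exact (map_coeff_map_C_mul_congr _ 0 _ (G := 0) (fun q => coeff_one_coeff_sb' (hP n) u q)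
    m).trans (LinearMap.zero_apply _)

/-- for `u ∈ ℝ[[t₀,t₁,…]]` (not involving `λ`), the Euler–Lagrange
equation `Σ_{n≥0} (t_n − δ_{n,1}) ((1 − λ∂/∂λ)R_n)[u] = 0` in `ℝ[λ][[t₀,t₁,…]]`
holds iff the string equation `u = Σ_{k≥1} t_k R_k[u] + t₀` holds (equivalently,
`Σ_{n≥0} (t_n − δ_{n,1}) R_n[u] = 0`); all sums are coefficientwise (finite). -/
theorem eulerLagrange_iff_string (R : ℕ → Polynomial (MvPolynomial ℕ ℝ))
    (hR : IsGD R) (u : MvPowerSeries ℕ ℝ) :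
    ((∀ m : ℕ →₀ ℕ,
        (∑ᶠ n : ℕ, MvPowerSeries.coeff (R := Polynomial ℝ) m
            ((MvPowerSeries.X n - if n = 1 then 1 else 0)
              * sb' u (R n - Polynomial.X * Polynomial.derivative (R n)))) = 0) ↔
      (∀ m : ℕ →₀ ℕ,
        MvPowerSeries.coeff (R := Polynomial ℝ) m
            (MvPowerSeries.map (σ := ℕ) (Polynomial.C : ℝ →+* Polynomial ℝ) u) =
          (∑ᶠ k : ℕ, MvPowerSeries.coeff (R := Polynomial ℝ) m
              (MvPowerSeries.X (k + 1) * sb' u (R (k + 1))))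
          + MvPowerSeries.coeff (R := Polynomial ℝ) m (MvPowerSeries.X 0))) ∧
    ((∀ m : ℕ →₀ ℕ,
        MvPowerSeries.coeff (R := Polynomial ℝ) m
            (MvPowerSeries.map (σ := ℕ) (Polynomial.C : ℝ →+* Polynomial ℝ) u) =
          (∑ᶠ k : ℕ, MvPowerSeries.coeff (R := Polynomial ℝ) m
              (MvPowerSeries.X (k + 1) * sb' u (R (k + 1))))
          + MvPowerSeries.coeff (R := Polynomial ℝ) m (MvPowerSeries.X 0)) ↔
      (∀ m : ℕ →₀ ℕ,
        (∑ᶠ n : ℕ, MvPowerSeries.coeff (R := Polynomial ℝ) m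
            ((MvPowerSeries.X n - if n = 1 then 1 else 0) * sb' u (R n))) = 0)) := by
  have hEL : ∀ m, stringSum u (fun n => Polynomial.oneSubXDerivative (R n)) m = 0 ↔
      stringSum u R m = 0 := fun m => by
    rw [stringSum_oneSubXDerivative, Polynomial.oneSubXDerivative_eq_zero_iff
      (coeff_one_stringSum hR.coeff_one_eq_zero u m)]
  have hstring : ∀ m, stringSum u R m = 0 ↔
      MvPowerSeries.coeff m (MvPowerSeries.map Polynomial.C u) =
        (∑ᶠ k, MvPowerSeries.coeff m (MvPowerSeries.X (k + 1) * sb' u (R (k + 1)))) +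
          MvPowerSeries.coeff m (MvPowerSeries.X 0) := fun m => by
    rw [stringSum, finsum_coeff_X_sub_ite_mul, hR.1, sb'_one, mul_one, hR.apply_one,
      sb'_C_X_zero, sub_eq_zero, eq_comm, add_comm]
  exact ⟨forall_congr' fun m => (hEL m).trans (hstring m),
    forall_congr' fun m => (hstring m).symm⟩
end

section
/- Define the sequence (a_n)_{n≥0} by a_0 = −1/2 and, for n ≥ 1, a_n = Σ_{k=1}^{n−1} a_k a_{n−k} + 2(5n−4)(5n−6) a_{n−1}. Then a_n > 0 for all n ≥ 1 (in particular a_1 = 1 and a_2 = 49), and a_n^{1/n} → ∞ as n → ∞; equivalently, 1/a_n^{1/n} → 0. -/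
/-!
Since `a 1 = 1` and every term of the convolution sum is a product of earlier terms, strong
induction shows `a n > 0` for `n ≥ 1`. Dropping the (nonnegative) sum and using
`n ^ 2 ≤ 2 (5n - 4)(5n - 6)` gives `a n ≥ n ^ 2 a (n - 1)`, hence `a n ≥ (n!) ^ 2 ≥ n!`,
and `(n!) ^ (1 / n) → ∞` because `c ^ n / n! → 0` for every `c`.
-/

open Filter Nat

theorem tendsto_factorial_rpow_inv_atTop :
    Tendsto (fun n : ℕ => (n ! : ℝ) ^ (n : ℝ)⁻¹) atTop atTop := by
  refine tendsto_atTop.2 fun C => ?_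
  set c := max C 0
  have hsmall : ∀ᶠ n : ℕ in atTop, c ^ n / n ! < 1 :=
    (FloorSemiring.tendsto_pow_div_factorial_atTop c).eventually_lt_const one_pos
  filter_upwards [hsmall, eventually_ne_atTop 0] with n hn hn0
  have hpow : c ^ n ≤ n ! := ((div_lt_one (by positivity)).1 hn).le
  calc C ≤ c := le_max_left C 0
    _ = (c ^ n) ^ (n : ℝ)⁻¹ := (Real.pow_rpow_inv_natCast (le_max_right C 0) hn0).symm
    _ ≤ (n ! : ℝ) ^ (n : ℝ)⁻¹ := by gcongr

namespace A094199

variable {a : ℕ → ℝ}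
  (hrec : ∀ n : ℕ, 1 ≤ n →
    a n = (∑ k ∈ Finset.Ico 1 n, a k * a (n - k))
      + 2 * (5 * (n : ℝ) - 4) * (5 * (n : ℝ) - 6) * a (n - 1))
include hrec

theorem a_one (h0 : a 0 = -1 / 2) : a 1 = 1 := by
  have h := hrec 1 le_rfl
  norm_num [h0] at h
  exact h

theorem a_two (h1 : a 1 = 1) : a 2 = 49 := by
  have h := hrec 2 (by norm_num)
  rw [show Finset.Ico 1 2 = {1} from rfl] at h
  norm_num [h1] at h
  linarith

theorem coeff_mul_le {n : ℕ} (hn : 2 ≤ n) (hpos : ∀ k, 1 ≤ k → k < n → 0 < a k) :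
    2 * (5 * (n : ℝ) - 4) * (5 * (n : ℝ) - 6) * a (n - 1) ≤ a n := by
  have hsum : 0 ≤ ∑ k ∈ Finset.Ico 1 n, a k * a (n - k) := by
    refine Finset.sum_nonneg fun k hk => ?_
    rw [Finset.mem_Ico] at hk
    exact (mul_pos (hpos k hk.1 hk.2) (hpos (n - k) (by omega) (by omega))).le
  rw [hrec n (by omega)]
  linarith

theorem pos (h1 : a 1 = 1) {n : ℕ} (hn : 1 ≤ n) : 0 < a n := by
  induction n using Nat.strong_induction_on with
  | _ n ih =>
    rcases hn.eq_or_lt with rfl | hn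
    · rw [h1]; norm_num
    have hn2 : (2 : ℝ) ≤ n := by exact_mod_cast hn
    have hcoeff : 0 < 2 * (5 * (n : ℝ) - 4) * (5 * (n : ℝ) - 6) := by nlinarith
    have hprev := ih (n - 1) (by omega) (by omega)
    exact (mul_pos hcoeff hprev).trans_le (coeff_mul_le hrec hn fun k hk hkn => ih k hkn hk)

theorem sq_mul_le (h1 : a 1 = 1) {n : ℕ} (hn : 2 ≤ n) : (n : ℝ) ^ 2 * a (n - 1) ≤ a n := by
  have hn2 : (2 : ℝ) ≤ n := by exact_mod_cast hn
  have hsq : (n : ℝ) ^ 2 ≤ 2 * (5 * (n : ℝ) - 4) * (5 * (n : ℝ) - 6) := by nlinarith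
  have hprev := pos hrec h1 (n := n - 1) (by omega)
  calc (n : ℝ) ^ 2 * a (n - 1) ≤ 2 * (5 * (n : ℝ) - 4) * (5 * (n : ℝ) - 6) * a (n - 1) := by
        gcongr
    _ ≤ a n := coeff_mul_le hrec hn fun k hk _ => pos hrec h1 hk

theorem factorial_sq_le (h1 : a 1 = 1) {n : ℕ} (hn : 1 ≤ n) : (n ! : ℝ) ^ 2 ≤ a n := by
  induction n, hn using Nat.le_induction with
  | base => simp [h1]
  | succ n hn ih =>
    calc ((n + 1)! : ℝ) ^ 2 = ((n + 1 : ℕ) : ℝ) ^ 2 * (n ! : ℝ) ^ 2 := by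
          push_cast [factorial_succ]; ring
      _ ≤ ((n + 1 : ℕ) : ℝ) ^ 2 * a n := by gcongr
      _ ≤ a (n + 1) := sq_mul_le hrec h1 (n := n + 1) (by omega)

end A094199

/-- if `a 0 = −1/2` and
`a n = Σ_{k=1}^{n−1} a_k a_{n−k} + 2(5n−4)(5n−6) a_{n−1}` for `n ≥ 1`
(OEIS A094199), then `a n > 0` for all `n ≥ 1` (in particular `a 1 = 1` and
`a 2 = 49`), and `a_n^{1/n} → ∞`; equivalently `1/a_n^{1/n} → 0`. -/
theorem A094199_growth (a : ℕ → ℝ) (h0 : a 0 = -1 / 2)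
    (hrec : ∀ n : ℕ, 1 ≤ n →
      a n = (∑ k ∈ Finset.Ico 1 n, a k * a (n - k))
        + 2 * (5 * (n : ℝ) - 4) * (5 * (n : ℝ) - 6) * a (n - 1)) :
    (∀ n : ℕ, 1 ≤ n → 0 < a n) ∧ a 1 = 1 ∧ a 2 = 49 ∧
    Tendsto (fun n : ℕ => a n ^ ((n : ℝ)⁻¹)) atTop atTop ∧
    Tendsto (fun n : ℕ => (a n ^ ((n : ℝ)⁻¹))⁻¹) atTop (nhds 0) := by
  have h1 : a 1 = 1 := A094199.a_one hrec h0
  have hroot : Tendsto (fun n : ℕ => a n ^ ((n : ℝ)⁻¹)) atTop atTop := by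
    refine tendsto_atTop_mono' atTop ?_ tendsto_factorial_rpow_inv_atTop
    filter_upwards [eventually_ge_atTop 1] with n hn
    have hfac : (n ! : ℝ) ≤ a n :=
      (le_self_pow₀ (by exact_mod_cast n.factorial_pos) two_ne_zero).trans
        (A094199.factorial_sq_le hrec h1 hn)
    gcongr
  exact ⟨fun n hn => A094199.pos hrec h1 hn, h1, A094199.a_two hrec h1, hroot,
    hroot.inv_tendsto_atTop⟩
end
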